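/- arXiv:0711.4100 — 2 statements merged into one kernel-verified Lean document; each statement's English description precedes it below -/
import Mathlib

section
/- The set of integers n ≥ 2 with v(n) > 2(τ(n−1) − 1) has positive lower natural density; that is, liminf_{x→∞} (1/x)·#{2 ≤ n ≤ x : v(n) > 2(τ(n−1)−1)} > 0. -/
/-!
A factorisation `n - 1 = d * e` gives the point `(d, n - e)` of `G_n`, and its mirror image
`(n - e, d)`. A point `(c, y)` of `G_n` with `c y = k₀ n + 1` is a vertex as soon as it is the
unique maximiser on `G_n` of `c² b - ((c - k₀) n - 1) a`; for `(a, b)` with `a b = k n + 1`,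
`a` times the gap is `((c - k₀) n - 1) (a - c)² + c² n ((a - k) - (c - k₀))`, and `a - k ≥ 1`.
For the divisor points `c - k₀ = 1`, so they are all vertices; the two mirror families lie on
either side of the diagonal and share at most `(1, 1)` and `(n - 1, n - 1)`, whence
`v(n) ≥ 2 (τ(n - 1) - 1)`. If `n ≡ 4127 (mod 4620)`, then `n - 1` has no divisor in `[3, 12]` and
`7 ∣ 5 n + 1`, and the criterion with `c - k₀ = 2` makes `(7, (5 n + 1) / 7)` one more vertex.
-/

open Filter MeasureTheory

noncomputable section

/-- The set `G_n = {(a,b) : 1 ≤ a,b ≤ n-1, ab ≡ 1 (mod n)}` as a set of points in `ℝ²`. -/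
def modPoints (n : ℕ) : Set (ℝ × ℝ) :=
  {p | ∃ a b : ℤ, 1 ≤ a ∧ a ≤ (n : ℤ) - 1 ∧ 1 ≤ b ∧ b ≤ (n : ℤ) - 1 ∧
    (n : ℤ) ∣ a * b - 1 ∧ p = ((a : ℝ), (b : ℝ))}

/-- The convex closure `C_n` of `G_n`. -/
def modHull (n : ℕ) : Set (ℝ × ℝ) := convexHull ℝ (modPoints n)

/-- The set of vertices (extreme points) of `C_n`. -/
def modVertices (n : ℕ) : Set (ℝ × ℝ) := Set.extremePoints ℝ (modHull n)

/-- `v(n)`, the number of vertices of `C_n`. -/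
def numVertices (n : ℕ) : ℕ := (modVertices n).ncard

section ConvexHull

variable {𝕜 E : Type*} [Field 𝕜] [LinearOrder 𝕜] [IsStrictOrderedRing 𝕜] [AddCommGroup E]
  [Module 𝕜 E] {S : Set E} {p z : E}

theorem eq_of_mem_convexHull_of_forall_lt (f : E →ₗ[𝕜] 𝕜) (h : ∀ q ∈ S, q ≠ p → f q < f p)
    (hz : z ∈ convexHull 𝕜 S) (hfz : f p ≤ f z) : z = p := by
  rcases (S \ {p}).eq_empty_or_nonempty with hT | hT
  · simpa using convexHull_mono (Set.sdiff_eq_empty.1 hT) hz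
  have hlt : convexHull 𝕜 (S \ {p}) ⊆ {w | f w < f p} :=
    convexHull_min (fun q hq => h q hq.1 hq.2) (convex_halfSpace_lt f.isLinear _)
  have hz' : z ∈ convexJoin 𝕜 {p} (convexHull 𝕜 (S \ {p})) := by
    rw [← convexHull_insert hT]
    exact convexHull_mono (fun q hq => by by_cases hqp : q = p <;> simp [hqp, hq]) hz
  obtain ⟨q, hq, c, hc, a, b, ha, hb, hab, rfl⟩ := mem_convexJoin.1 hz'
  subst hq
  have hfc : f c < f q := hlt hc
  have hfz' : b * (f q - f c) ≤ 0 := by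
    simp only [map_add, map_smul, smul_eq_mul] at hfz
    linear_combination hfz + f q * hab
  obtain rfl : b = 0 := le_antisymm (by nlinarith) hb
  obtain rfl : a = 1 := by linarith
  simp

theorem mem_extremePoints_convexHull_of_forall_lt (f : E →ₗ[𝕜] 𝕜) (hp : p ∈ S)
    (h : ∀ q ∈ S, q ≠ p → f q < f p) : p ∈ (convexHull 𝕜 S).extremePoints 𝕜 := by
  have hle : convexHull 𝕜 S ⊆ {w | f w ≤ f p} :=
    convexHull_min (fun q hq => (eq_or_ne q p).elim (fun e => e ▸ le_rfl) (h q hq · |>.le))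
      (convex_halfSpace_le f.isLinear _)
  refine mem_extremePoints.2
    ⟨subset_convexHull 𝕜 S hp, fun x hx y hy ⟨a, b, ha, hb, hab, hxy⟩ => ?_⟩
  have hfxy : a * f x + b * f y = f p := by rw [← hxy]; simp
  have hsum : a * (f p - f x) + b * (f p - f y) = 0 := by linear_combination f p * hab - hfxy
  have hfx : f x ≤ f p := hle hx
  have hfy : f y ≤ f p := hle hy
  have hpx : f p ≤ f x := by nlinarith [mul_nonneg hb.le (sub_nonneg.2 hfy)]
  have hpy : f p ≤ f y := by nlinarith [mul_nonneg ha.le (sub_nonneg.2 hfx)]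
  exact ⟨eq_of_mem_convexHull_of_forall_lt f h hx hpx, eq_of_mem_convexHull_of_forall_lt f h hy hpy⟩

end ConvexHull

def OnModHyperbola (n : ℕ) (a b : ℤ) : Prop :=
  1 ≤ a ∧ a ≤ (n : ℤ) - 1 ∧ 1 ≤ b ∧ b ≤ (n : ℤ) - 1 ∧ (n : ℤ) ∣ a * b - 1

namespace OnModHyperbola

variable {n : ℕ} {a b k : ℤ}

theorem swap (h : OnModHyperbola n a b) : OnModHyperbola n b a := by
  obtain ⟨ha₁, ha₂, hb₁, hb₂, hdvd⟩ := h
  exact ⟨hb₁, hb₂, ha₁, ha₂, mul_comm a b ▸ hdvd⟩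

theorem exists_mul_eq (h : OnModHyperbola n a b) : ∃ k, a * b = k * n + 1 := by
  obtain ⟨k, hk⟩ := h.2.2.2.2
  exact ⟨k, by linear_combination hk⟩

theorem lt_of_mul_eq (h : OnModHyperbola n a b) (hk : a * b = k * n + 1) : k < a := by
  obtain ⟨ha₁, ha₂, hb₁, hb₂, -⟩ := h
  nlinarith

end OnModHyperbola

theorem mem_modPoints {n : ℕ} {p : ℝ × ℝ} :
    p ∈ modPoints n ↔ ∃ a b : ℤ, OnModHyperbola n a b ∧ p = ((a : ℝ), (b : ℝ)) := by
  simp only [modPoints, OnModHyperbola, Set.mem_ofPred_eq, and_assoc]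

theorem modVertices_finite (n : ℕ) : (modVertices n).Finite := by
  refine (((Set.finite_Icc ((1 : ℤ), (1 : ℤ)) (n - 1, n - 1)).image
    fun q : ℤ × ℤ => ((q.1 : ℝ), (q.2 : ℝ))).subset ?_).subset extremePoints_convexHull_subset
  rintro _ ⟨a, b, ha₁, ha₂, hb₁, hb₂, -, rfl⟩
  exact ⟨(a, b), ⟨⟨ha₁, hb₁⟩, ha₂, hb₂⟩, rfl⟩

theorem swap_mem_modVertices {n : ℕ} {p : ℝ × ℝ} (hp : p ∈ modVertices n) :
    p.swap ∈ modVertices n := by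
  have hswap : ∀ q : ℝ × ℝ, q ∈ modPoints n → q.swap ∈ modPoints n := by
    simp only [mem_modPoints]
    rintro _ ⟨a, b, hab, rfl⟩
    exact ⟨b, a, hab.swap, rfl⟩
  have himage : LinearEquiv.prodComm ℝ ℝ ℝ '' modPoints n = modPoints n :=
    Set.Subset.antisymm (Set.image_subset_iff.2 hswap) fun q hq => ⟨q.swap, hswap q hq, rfl⟩
  have hhull : LinearEquiv.prodComm ℝ ℝ ℝ '' modHull n = modHull n := by
    rw [modHull, ← LinearEquiv.coe_coe, LinearMap.image_convexHull, LinearEquiv.coe_coe, himage]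
  rw [modVertices, ← hhull, ← image_extremePoints]
  exact ⟨p, hp, rfl⟩

theorem mem_modVertices_of_forall_lt {n : ℕ} {a₀ b₀ : ℤ} (α β : ℤ) (h₀ : OnModHyperbola n a₀ b₀)
    (h : ∀ a b, OnModHyperbola n a b → (a, b) ≠ (a₀, b₀) → α * a + β * b < α * a₀ + β * b₀) :
    ((a₀ : ℝ), (b₀ : ℝ)) ∈ modVertices n := by
  refine mem_extremePoints_convexHull_of_forall_lt
    ((α : ℝ) • LinearMap.fst ℝ ℝ ℝ + (β : ℝ) • LinearMap.snd ℝ ℝ ℝ)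
    (mem_modPoints.2 ⟨a₀, b₀, h₀, rfl⟩) ?_
  simp only [mem_modPoints]
  rintro _ ⟨a, b, hab, rfl⟩ hne
  have := h a b hab (by rintro ⟨⟩; exact hne rfl)
  simp only [LinearMap.add_apply, LinearMap.smul_apply, LinearMap.fst_apply, LinearMap.snd_apply,
    smul_eq_mul]
  exact_mod_cast this

theorem mem_modVertices_of_forall_sub_lt {n : ℕ} {c y k₀ : ℤ} (hX : OnModHyperbola n c y)
    (hk₀ : c * y = k₀ * n + 1)
    (hgap : ∀ a b k, OnModHyperbola n a b → a * b = k * n + 1 → a - k < c - k₀ →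
      c ^ 2 * n * (c - k₀ - (a - k)) < ((c - k₀) * n - 1) * (a - c) ^ 2) :
    ((c : ℝ), (y : ℝ)) ∈ modVertices n := by
  have hc : 1 ≤ c := hX.1
  have hn : (2 : ℤ) ≤ n := by linarith [hX.2.1]
  have hk₀c : k₀ < c := hX.lt_of_mul_eq hk₀
  have hslope : 0 < (c - k₀) * n - 1 := by nlinarith
  refine mem_modVertices_of_forall_lt (-((c - k₀) * n - 1)) (c ^ 2) hX fun a b hab hne => ?_
  obtain ⟨k, hk⟩ := hab.exists_mul_eq
  have ha : 0 < a := hab.1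
  have key : a * (-((c - k₀) * n - 1) * c + c ^ 2 * y - (-((c - k₀) * n - 1) * a + c ^ 2 * b)) =
      ((c - k₀) * n - 1) * (a - c) ^ 2 + c ^ 2 * n * (a - k - (c - k₀)) := by
    linear_combination a * c * hk₀ - c ^ 2 * hk
  have hpos : 0 < ((c - k₀) * n - 1) * (a - c) ^ 2 + c ^ 2 * n * (a - k - (c - k₀)) := by
    rcases lt_trichotomy (a - k) (c - k₀) with hlt | heq | hgt
    · linarith [hgap a b k hab hk hlt]
    · have hac : a ≠ c := by
        rintro rfl
        refine hne (Prod.ext rfl (mul_left_cancel₀ ha.ne' ?_))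
        linear_combination hk - hk₀ - n * heq
      rw [heq, sub_self, mul_zero, add_zero]
      exact mul_pos hslope (by positivity)
    · have : 0 < c ^ 2 * n * (a - k - (c - k₀)) := by
        apply mul_pos (by positivity) (by linarith)
      nlinarith [mul_nonneg hslope.le (sq_nonneg (a - c))]
  nlinarith

def divisorVertex (n : ℕ) (de : ℕ × ℕ) : ℝ × ℝ := (de.1, n - de.2)

theorem divisorVertex_injective (n : ℕ) : Function.Injective (divisorVertex n) := by
  rintro ⟨d, e⟩ ⟨d', e'⟩ h
  simp_all [divisorVertex]

theorem eq_mul_add_one_of_mem_divisorsAntidiagonal {n : ℕ} {de : ℕ × ℕ}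
    (h : de ∈ (n - 1).divisorsAntidiagonal) : n = de.1 * de.2 + 1 ∧ 1 ≤ de.1 ∧ 1 ≤ de.2 := by
  obtain ⟨hde, hn⟩ := Nat.mem_divisorsAntidiagonal.1 h
  have hd := Nat.pos_of_mem_divisors (Nat.fst_mem_divisors_of_mem_antidiagonal h)
  have he := Nat.pos_of_mem_divisors (Nat.snd_mem_divisors_of_mem_antidiagonal h)
  exact ⟨by omega, hd, he⟩

theorem divisorVertex_mem_modVertices {n : ℕ} {de : ℕ × ℕ}
    (h : de ∈ (n - 1).divisorsAntidiagonal) : divisorVertex n de ∈ modVertices n := by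
  obtain ⟨d, e⟩ := de
  obtain ⟨hn, hd, he⟩ := eq_mul_add_one_of_mem_divisorsAntidiagonal h
  dsimp only at hn hd he
  subst hn
  have hd' : (1 : ℤ) ≤ d := by exact_mod_cast hd
  have he' : (1 : ℤ) ≤ e := by exact_mod_cast he
  have hX : OnModHyperbola (d * e + 1) d (d * e + 1 - e) := by
    unfold OnModHyperbola
    push_cast
    exact ⟨hd', by nlinarith, by nlinarith, by linarith, ⟨d - 1, by ring⟩⟩
  have := mem_modVertices_of_forall_sub_lt hX (k₀ := d - 1) (by push_cast; ring)
    fun a b k hab hk hlt => absurd (hab.lt_of_mul_eq hk) (by omega)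
  simpa [divisorVertex] using this

theorem divisorVertex_fst_le_snd {n : ℕ} {de : ℕ × ℕ} (h : de ∈ (n - 1).divisorsAntidiagonal) :
    (divisorVertex n de).1 ≤ (divisorVertex n de).2 := by
  obtain ⟨rfl, hd, he⟩ := eq_mul_add_one_of_mem_divisorsAntidiagonal h
  have hd' : (1 : ℝ) ≤ de.1 := by exact_mod_cast hd
  have he' : (1 : ℝ) ≤ de.2 := by exact_mod_cast he
  simp only [divisorVertex]
  push_cast
  nlinarith

theorem divisorVertex_eq_of_fst_eq_snd {n : ℕ} {de : ℕ × ℕ}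
    (h : de ∈ (n - 1).divisorsAntidiagonal)
    (hdiag : (divisorVertex n de).1 = (divisorVertex n de).2) :
    divisorVertex n de = (1, 1) ∨ divisorVertex n de = ((n : ℝ) - 1, (n : ℝ) - 1) := by
  obtain ⟨rfl, hd, he⟩ := eq_mul_add_one_of_mem_divisorsAntidiagonal h
  simp only [divisorVertex, Prod.mk.injEq] at hdiag ⊢
  push_cast at hdiag ⊢
  have hfactor : ((de.1 : ℝ) - 1) * ((de.2 : ℝ) - 1) = 0 := by linear_combination -hdiag
  rcases mul_eq_zero.1 hfactor with hd₁ | he₁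
  · left
    rw [sub_eq_zero.1 hd₁]
    constructor <;> ring
  · right
    rw [sub_eq_zero.1 he₁]
    constructor <;> ring

theorem two_mul_card_divisors_sub_one_lt_numVertices {n : ℕ} {X : ℝ × ℝ}
    (hX : X ∈ modVertices n) (hX_lt : X.1 < X.2) (hX_div : ∀ d ∈ (n - 1).divisors, X.1 ≠ d) :
    2 * ((n - 1).divisors.card - 1) < numVertices n := by
  classical
  set A := (n - 1).divisorsAntidiagonal.image (divisorVertex n)
  set B := A.image Prod.swap
  have hA : A.card = (n - 1).divisors.card := by
    rw [Finset.card_image_of_injective _ (divisorVertex_injective n),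
      ← Nat.map_div_right_divisors, Finset.card_map]
  have hB : B.card = A.card := Finset.card_image_of_injective _ Prod.swap_injective
  have hAB : (A ∩ B).card ≤ 2 := by
    refine (Finset.card_le_card (t := {(1, 1), ((n : ℝ) - 1, (n : ℝ) - 1)}) ?_).trans
      Finset.card_le_two
    intro z hz
    obtain ⟨hzA, hzB⟩ := Finset.mem_inter.1 hz
    obtain ⟨de, hde, rfl⟩ := Finset.mem_image.1 hzA
    obtain ⟨_, hA', hswap⟩ := Finset.mem_image.1 hzB
    obtain ⟨de', hde', rfl⟩ := Finset.mem_image.1 hA'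
    have hle : (divisorVertex n de).2 ≤ (divisorVertex n de).1 :=
      hswap ▸ divisorVertex_fst_le_snd hde'
    rcases divisorVertex_eq_of_fst_eq_snd hde (le_antisymm (divisorVertex_fst_le_snd hde) hle)
      with h | h <;> simp [h]
  have hXA : X ∉ A := by
    intro hXA
    obtain ⟨de, hde, rfl⟩ := Finset.mem_image.1 hXA
    exact hX_div de.1 (Nat.fst_mem_divisors_of_mem_antidiagonal hde) rfl
  have hXB : X ∉ B := by
    intro hXB
    obtain ⟨_, hA', rfl⟩ := Finset.mem_image.1 hXB
    obtain ⟨de, hde, rfl⟩ := Finset.mem_image.1 hA'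
    exact (divisorVertex_fst_le_snd hde).not_gt hX_lt
  have hsub : (↑(insert X (A ∪ B)) : Set (ℝ × ℝ)) ⊆ modVertices n := by
    intro z hz
    simp only [Finset.coe_insert, Finset.coe_union, Set.mem_insert_iff, Set.mem_union,
      Finset.mem_coe] at hz
    rcases hz with rfl | hzA | hzB
    · exact hX
    · obtain ⟨de, hde, rfl⟩ := Finset.mem_image.1 hzA
      exact divisorVertex_mem_modVertices hde
    · obtain ⟨_, hA', rfl⟩ := Finset.mem_image.1 hzB
      obtain ⟨de, hde, rfl⟩ := Finset.mem_image.1 hA'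
      exact swap_mem_modVertices (divisorVertex_mem_modVertices hde)
  have hunion := Finset.card_union_add_card_inter A B
  calc 2 * ((n - 1).divisors.card - 1) < (insert X (A ∪ B)).card := by
        rw [Finset.card_insert_of_notMem (by simp [hXA, hXB])]
        omega
    _ ≤ numVertices n := by
        rw [← Set.ncard_coe_finset]
        exact Set.ncard_le_ncard hsub (modVertices_finite n)

theorem seven_mem_modVertices {n y : ℕ} (hn : 26 ≤ n)
    (hdiv : ∀ a : ℤ, 3 ≤ a → a ≤ 12 → ¬a ∣ (n : ℤ) - 1) (hy : 7 * y = 5 * n + 1) :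
    ((7 : ℝ), (y : ℝ)) ∈ modVertices n := by
  have hy' : (7 : ℤ) * y = 5 * n + 1 := by exact_mod_cast hy
  have hX : OnModHyperbola n 7 y := ⟨by norm_num, by omega, by omega, by omega, ⟨5, by linarith⟩⟩
  have := mem_modVertices_of_forall_sub_lt hX (k₀ := 5) (by linarith) fun a b k hab hk hlt => by
    have hka : a - k = 1 := by linarith [hab.lt_of_mul_eq hk]
    have hdvd : a ∣ (n : ℤ) - 1 := ⟨n - b, by linear_combination hk - n * hka⟩
    have hsq : 25 ≤ (a - 7) ^ 2 := by
      rcases le_or_gt a 2 with ha | ha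
      · nlinarith [hab.1]
      · have : 13 ≤ a := by by_contra! h; exact hdiv a (by omega) (by omega) hdvd
        nlinarith
    rw [hka]
    nlinarith [mul_le_mul_of_nonneg_left hsq (show (0 : ℤ) ≤ 2 * n - 1 by omega)]
  exact_mod_cast this

theorem two_mul_card_divisors_sub_one_lt_numVertices_of_mod_eq {n : ℕ} (hn : n % 4620 = 4127) :
    2 * ((n - 1).divisors.card - 1) < numVertices n := by
  obtain ⟨y, hy⟩ : 7 ∣ 5 * n + 1 := by omega
  refine two_mul_card_divisors_sub_one_lt_numVertices (X := ((7 : ℝ), (y : ℝ)))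
    (seven_mem_modVertices (by omega) (fun a h₃ h₁₂ => by interval_cases a <;> omega) (by omega))
    (by dsimp only; exact_mod_cast (by omega : 7 < y)) fun d hd h => ?_
  obtain rfl : d = 7 := by
    have h7 : (d : ℝ) = 7 := h.symm
    exact_mod_cast h7
  have := Nat.dvd_of_mem_divisors hd
  omega

theorem zero_lt_liminf_ncard_div_of_mod_eq {P : ℕ → Prop} {m r : ℕ} (hr : r < m)
    (hP : ∀ n, n % m = r → P n) :
    0 < liminf (fun x : ℕ => ({n | n ≤ x ∧ P n}.ncard : ℝ) / x) atTop := by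
  have hm : 0 < m := by omega
  have hfin : ∀ x, {n | n ≤ x ∧ P n}.Finite := fun x => (Set.finite_Iic x).subset fun n hn => hn.1
  have hlower : ∀ x, x / m ≤ {n | n ≤ x ∧ P n}.ncard := fun x => by
    have hmaps : ∀ j ∈ (Finset.range (x / m) : Set ℕ), r + m * j ∈ {n | n ≤ x ∧ P n} := by
      intro j hj
      simp only [Finset.coe_range, Set.mem_Iio] at hj
      refine ⟨by nlinarith [Nat.div_mul_le_self x m], hP _ ?_⟩
      rw [Nat.add_mul_mod_self_left, Nat.mod_eq_of_lt hr]
    simpa using Set.ncard_le_ncard_of_injOn _ hmaps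
      (fun i _ j _ h => by simpa [hm.ne'] using h) (hfin x)
  have hupper : ∀ x, {n | n ≤ x ∧ P n}.ncard ≤ x + 1 := fun x => by
    simpa using Set.ncard_le_ncard (fun n hn => hn.1) (Set.finite_Iic x)
  have hbounded : ∀ᶠ x : ℕ in atTop, ({n | n ≤ x ∧ P n}.ncard : ℝ) / x ≤ 2 := by
    refine eventually_atTop.2 ⟨1, fun x hx => ?_⟩
    have hx' : (1 : ℝ) ≤ x := by exact_mod_cast hx
    have : ({n | n ≤ x ∧ P n}.ncard : ℝ) ≤ x + 1 := by exact_mod_cast hupper x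
    rw [div_le_iff₀ (by positivity)]
    linarith
  have hdense : ∀ᶠ x : ℕ in atTop, 1 / (2 * m : ℝ) ≤ ({n | n ≤ x ∧ P n}.ncard : ℝ) / x := by
    refine eventually_atTop.2 ⟨m, fun x hx => ?_⟩
    have hq : 1 ≤ x / m := (Nat.one_le_div_iff hm).2 hx
    have hx2 : x ≤ 2 * m * (x / m) := by nlinarith [Nat.lt_mul_div_succ x hm]
    have : (x : ℝ) ≤ 2 * m * {n | n ≤ x ∧ P n}.ncard := by
      exact_mod_cast hx2.trans (Nat.mul_le_mul_left _ (hlower x))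
    rw [div_le_div_iff₀ (by positivity) (Nat.cast_pos.2 (by omega))]
    linarith
  exact (show (0 : ℝ) < 1 / (2 * m) by positivity).trans_le
    (le_liminf_of_le (isCoboundedUnder_ge_of_eventually_le atTop hbounded) hdense)

theorem stmt11 :
    0 < Filter.liminf (fun x : ℕ =>
      (({n : ℕ | 2 ≤ n ∧ n ≤ x ∧
        2 * ((n - 1).divisors.card - 1) < numVertices n}.ncard : ℝ)) / (x : ℝ))
      Filter.atTop := by
  simp only [and_left_comm (a := 2 ≤ _)]
  exact zero_lt_liminf_ncard_div_of_mod_eq (by norm_num : 4127 < 4620) fun n hn =>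
    ⟨by omega, two_mul_card_divisors_sub_one_lt_numVertices_of_mod_eq hn⟩
end
end

section
/- Let n ≥ 3 be an integer and let (a, b) be a vertex of C_n. Then there exists an integer j with 1 ≤ j ≤ max(1, ⌊(T(n−1)+3)/4⌋) such that a(n − b) = jn − 1 or b(n − a) = jn − 1; that is, every vertex of C_n lies on one of the curves x(n−y) = jn−1 or y(n−x) = jn−1 with j ≤ max(1, ⌊(T(n−1)+3)/4⌋). -/
/-!
A vertex `(a, b)` of `C_n` is a point of `G_n`, and writing `a b = 1 + c n` puts it on the curves
`x (n - y) = j₁ n - 1` and `y (n - x) = j₂ n - 1` with `j₁ = a - c`, `j₂ = b - c`. The points of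
`G_n` on the curves with `j = 1` are the `(d, n - q)` and `(n - q, d)` with `d q = n - 1`. If both
`j₁` and `j₂` exceed `(T(n-1) + 3) / 4`, then `(a, b)` lies in the convex hull of these points:
given a linear functional, say with nonnegative `x`-coefficient, choose consecutive divisors
`d < e` of `s = n - 1` with `s / e ≤ n - b ≤ s / d`. Since `e / d ≤ T(s)`, AM-GM shows that
`(a, n - b)` lies beyond the chord of the hyperbola `x y = s` joining `(d, s / d)` and
`(e, s / e)`, so the functional is not larger at one of the two corresponding points than at
`(a, b)`. Being extreme in `C_n`, the vertex is then itself one of them, so `j = 1` works.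
-/

open Filter MeasureTheory

noncomputable section

/-- `T(s)`, the maximal ratio `d_{i+1}/d_i` of consecutive divisors of `s`. -/
def Tratio (s : ℕ) : ℝ :=
  sSup {r : ℝ | ∃ d e : ℕ, d ∣ s ∧ e ∣ s ∧ d < e ∧
    (∀ f : ℕ, f ∣ s → ¬(d < f ∧ f < e)) ∧ r = (e : ℝ) / (d : ℝ)}

theorem Nat.exists_consecutive_divisors_mul_le_le_mul {s : ℕ} (hs : 2 ≤ s) {k : ℝ}
    (hk1 : 1 ≤ k) (hks : k ≤ s) :
    ∃ d e : ℕ, d ∣ s ∧ e ∣ s ∧ d < e ∧ (∀ f : ℕ, f ∣ s → ¬(d < f ∧ f < e)) ∧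
      d * k ≤ s ∧ s ≤ e * k := by
  classical
  have hs0 : s ≠ 0 := by omega
  set D := s.properDivisors.filter fun d : ℕ => (d : ℝ) * k ≤ s
  have h1D : 1 ∈ D := by simpa [D] using ⟨by omega, hks⟩
  obtain ⟨d, hdD, hdmax⟩ := D.exists_max_image id ⟨1, h1D⟩
  obtain ⟨⟨hds, hdlt⟩, hdk⟩ : (d ∣ s ∧ d < s) ∧ d * k ≤ s := by
    simpa [D, Nat.mem_properDivisors] using hdD
  set E := s.divisors.filter (d < ·)
  obtain ⟨e, heE, hemin⟩ := E.exists_min_image id ⟨s, by simpa [E] using ⟨hs0, hdlt⟩⟩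
  obtain ⟨hes, hde⟩ : e ∣ s ∧ d < e := by simpa [E, hs0] using heE
  refine ⟨d, e, hds, hes, hde, fun f hfs ⟨hdf, hfe⟩ => ?_, hdk, ?_⟩
  · exact (hemin f (by simpa [E, hs0] using ⟨hfs, hdf⟩)).not_gt hfe
  · rcases (Nat.le_of_dvd (by omega) hes).eq_or_lt with rfl | hlt
    · nlinarith
    · by_contra! hek
      exact (hdmax e (by simpa [D, Nat.mem_properDivisors] using ⟨⟨hes, hlt⟩, hek.le⟩)).not_gt hde

theorem div_le_Tratio {s d e : ℕ} (hs : s ≠ 0) (hd : d ∣ s) (he : e ∣ s) (hde : d < e)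
    (hcons : ∀ f : ℕ, f ∣ s → ¬(d < f ∧ f < e)) : (e : ℝ) / d ≤ Tratio s := by
  refine le_csSup ⟨s, ?_⟩ ⟨d, e, hd, he, hde, hcons, rfl⟩
  rintro r ⟨d', e', hd', he', -, -, rfl⟩
  have hd'1 : (1 : ℝ) ≤ d' := by exact_mod_cast Nat.pos_of_dvd_of_pos hd' (Nat.pos_of_ne_zero hs)
  calc (e' : ℝ) / d' ≤ e' := div_le_self (Nat.cast_nonneg _) hd'1
    _ ≤ s := by exact_mod_cast Nat.le_of_dvd (Nat.pos_of_ne_zero hs) he'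

theorem add_sq_le_mul_mul_add_three {d e T : ℝ} (hd : 0 < d) (hde : d ≤ e) (heT : e ≤ T * d) :
    (d + e) ^ 2 ≤ d * e * (T + 3) := by
  nlinarith [mul_le_mul_of_nonneg_left hde hd.le, mul_le_mul_of_nonneg_left heT (hd.le.trans hde)]

/-- `(a, k)` lies beyond the chord of `x y = s` through `(d, s / d)` and `(e, s / e)`. -/
theorem hyperbola_chord_le {s d e T j a k : ℝ} (hs : 0 < s) (hd : 0 < d) (hde : d ≤ e)
    (heT : e ≤ T * d) (hj : T + 3 ≤ 4 * j) (hk : 0 < k) (hak : j * s ≤ a * k) :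
    s * (d + e) ≤ s * a + d * e * k := by
  have he : 0 < e := hd.trans_le hde
  have hsq : (s * (d + e)) ^ 2 ≤ 4 * (s * a) * (d * e * k) :=
    calc (s * (d + e)) ^ 2 ≤ s ^ 2 * (d * e * (T + 3)) := by
          rw [mul_pow]; gcongr; exact add_sq_le_mul_mul_add_three hd hde heT
      _ ≤ s ^ 2 * (d * e * (4 * j)) := by gcongr
      _ = 4 * s * (d * e) * (j * s) := by ring
      _ ≤ 4 * s * (d * e) * (a * k) := by gcongr
      _ = 4 * (s * a) * (d * e * k) := by ring
  have hY : 0 < d * e * k := by positivity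
  have hX : 0 < s * a := by
    have : 0 < 4 * (s * a) * (d * e * k) := (by positivity : 0 < (s * (d + e)) ^ 2).trans_le hsq
    exact pos_of_mul_pos_right (pos_of_mul_pos_left this hY.le) zero_le_four
  refine (pow_le_pow_iff_left₀ (by positivity) (by positivity) two_ne_zero).1 ?_
  exact hsq.trans (four_mul_le_sq_add _ _)

theorem le_or_le_of_hyperbola_chord_le {s d e qd qe a k α γ : ℝ} (hs : 0 < s) (hα : 0 ≤ α)
    (hqd : d * qd = s) (hqe : e * qe = s) (hkd : k ≤ qd) (hke : qe ≤ k)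
    (hchord : s * (d + e) ≤ s * a + d * e * k) :
    α * d + γ * qd ≤ α * a + γ * k ∨ α * e + γ * qe ≤ α * a + γ * k := by
  have hbeyond : 0 ≤ α * (s * a + d * e * k - s * (d + e)) :=
    mul_nonneg hα (sub_nonneg.2 hchord)
  -- compare the slope of the functional with that of the chord
  rcases le_total (α * (d * e)) (γ * s) with h | h
  · right
    have : 0 ≤ s * (α * (a - e) + γ * (k - qe)) := by
      have hid : s * (α * (a - e) + γ * (k - qe)) - (γ * s - α * (d * e)) * (k - qe) =
          α * (s * a + d * e * k - s * (d + e)) := by linear_combination (-α * d) * hqe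
      nlinarith [mul_nonneg (sub_nonneg.2 h) (sub_nonneg.2 hke)]
    nlinarith [nonneg_of_mul_nonneg_right this hs]
  · left
    have : 0 ≤ s * (α * (a - d) + γ * (k - qd)) := by
      have hid : s * (α * (a - d) + γ * (k - qd)) - (α * (d * e) - γ * s) * (qd - k) =
          α * (s * a + d * e * k - s * (d + e)) := by linear_combination (-α * e) * hqd
      nlinarith [mul_nonneg (sub_nonneg.2 h) (sub_nonneg.2 hkd)]
    nlinarith [nonneg_of_mul_nonneg_right this hs]

def divisorPoints (n : ℕ) : Set (ℝ × ℝ) :=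
  (fun p : ℕ × ℕ => ((p.1 : ℝ), (n : ℝ) - p.2)) '' ((n - 1).divisorsAntidiagonal : Set (ℕ × ℕ))

def symmDivisorPoints (n : ℕ) : Set (ℝ × ℝ) := divisorPoints n ∪ Prod.swap '' divisorPoints n

theorem symmDivisorPoints_finite (n : ℕ) : (symmDivisorPoints n).Finite :=
  have h : (divisorPoints n).Finite := (Finset.finite_toSet _).image _
  h.union (h.image _)

theorem swap_mem_symmDivisorPoints {n : ℕ} {p : ℝ × ℝ} (hp : p ∈ divisorPoints n) :
    p.swap ∈ symmDivisorPoints n :=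
  Or.inr (Set.mem_image_of_mem _ hp)

theorem mk_mem_divisorPoints {n d q : ℕ} (hn : 2 ≤ n) (h : d * q = n - 1) :
    ((d : ℝ), (n : ℝ) - q) ∈ divisorPoints n :=
  ⟨(d, q), by simp only [Finset.mem_coe, Nat.mem_divisorsAntidiagonal]; omega, rfl⟩

theorem exists_of_mem_divisorPoints {n : ℕ} {p : ℝ × ℝ} (hp : p ∈ divisorPoints n) :
    ∃ d q : ℤ, 1 ≤ d ∧ 1 ≤ q ∧ d * q + 1 = n ∧ p = ((d : ℝ), (n : ℝ) - q) := by
  obtain ⟨⟨d, q⟩, hdq, rfl⟩ := hp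
  simp only [Finset.mem_coe, Nat.mem_divisorsAntidiagonal] at hdq
  have hd : d ≠ 0 := by rintro rfl; omega
  have hq : q ≠ 0 := by rintro rfl; omega
  exact ⟨d, q, by omega, by omega, by norm_cast; omega, by push_cast; rfl⟩

theorem divisorPoints_subset_modPoints (n : ℕ) : divisorPoints n ⊆ modPoints n := by
  intro p hp
  obtain ⟨d, q, hd, hq, h, rfl⟩ := exists_of_mem_divisorPoints hp
  exact ⟨d, n - q, hd, by nlinarith, by nlinarith, by omega, ⟨d - 1, by linear_combination -h⟩,
    by push_cast; rfl⟩

theorem swap_mem_modPoints {n : ℕ} {p : ℝ × ℝ} (hp : p ∈ modPoints n) : p.swap ∈ modPoints n := by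
  obtain ⟨a, b, ha1, han, hb1, hbn, hab, rfl⟩ := hp
  exact ⟨b, a, hb1, hbn, ha1, han, mul_comm a b ▸ hab, rfl⟩

theorem symmDivisorPoints_subset_modPoints (n : ℕ) : symmDivisorPoints n ⊆ modPoints n :=
  Set.union_subset (divisorPoints_subset_modPoints n) <| Set.image_subset_iff.2 fun _ hp =>
    swap_mem_modPoints (divisorPoints_subset_modPoints n hp)

theorem exists_mem_divisorPoints_le {n : ℕ} (hn : 3 ≤ n) {a b j α β : ℝ} (hb1 : 1 ≤ b)
    (hbn : b ≤ n - 1) (hj : a * (n - b) = j * n - 1) (hjT : (Tratio (n - 1) + 3) / 4 < j)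
    (hα : 0 ≤ α) :
    ∃ p ∈ divisorPoints n, α * p.1 + β * p.2 ≤ α * a + β * b := by
  obtain ⟨s, rfl⟩ : ∃ s, n = s + 1 := ⟨n - 1, by omega⟩
  rw [Nat.add_sub_cancel] at hjT
  push_cast [add_sub_cancel_right] at hbn hj
  obtain ⟨d, e, hds, hes, hde, hcons, hdk, hek⟩ :=
    Nat.exists_consecutive_divisors_mul_le_le_mul (s := s) (by omega) (k := s + 1 - b)
      (by linarith) (by linarith)
  have hT : (e : ℝ) / d ≤ Tratio s := div_le_Tratio (by omega) hds hes hde hcons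
  obtain ⟨qd, hqd⟩ := hds
  obtain ⟨qe, hqe⟩ := hes
  have hsR : (0 : ℝ) < s := by exact_mod_cast (show 0 < s by omega)
  have hd : (0 : ℝ) < d := by exact_mod_cast Nat.pos_of_ne_zero (by rintro rfl; omega)
  have hdeR : (d : ℝ) < e := by exact_mod_cast hde
  have heT : (e : ℝ) ≤ Tratio s * d := (div_le_iff₀ hd).1 hT
  have hj1 : 1 ≤ j := by
    have : 1 < Tratio s := ((one_lt_div hd).2 hdeR).trans_le hT
    linarith
  have hchord := hyperbola_chord_le (j := j) (a := a) (k := s + 1 - b) hsR hd hdeR.le heT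
    (by linarith) (by linarith) (by nlinarith)
  have hqdR : (d : ℝ) * qd = s := by exact_mod_cast hqd.symm
  have hqeR : (e : ℝ) * qe = s := by exact_mod_cast hqe.symm
  rcases le_or_le_of_hyperbola_chord_le hsR hα (γ := -β) hqdR hqeR
    (by nlinarith) (by nlinarith) hchord with h | h
  · refine ⟨_, mk_mem_divisorPoints (d := d) (q := qd) (by omega) (by simp [hqd]), ?_⟩
    push_cast
    linarith
  · refine ⟨_, mk_mem_divisorPoints (d := e) (q := qe) (by omega) (by simp [hqe]), ?_⟩
    push_cast
    linarith

theorem Set.Finite.mem_convexHull_of_forall_exists_le {E : Type*} [TopologicalSpace E]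
    [AddCommGroup E] [Module ℝ E] [IsTopologicalAddGroup E] [ContinuousSMul ℝ E]
    [LocallyConvexSpace ℝ E] [T2Space E] {s : Set E} (hs : s.Finite) {x : E}
    (h : ∀ f : StrongDual ℝ E, ∃ y ∈ s, f y ≤ f x) : x ∈ convexHull ℝ s := by
  by_contra hx
  obtain ⟨f, u, hfx, hfs⟩ :=
    geometric_hahn_banach_point_closed (convex_convexHull ℝ s) (hs.isClosed_convexHull ℝ) hx
  obtain ⟨y, hy, hfy⟩ := h f
  linarith [hfs y (subset_convexHull ℝ s hy)]

theorem StrongDual.apply_prod_eq (f : StrongDual ℝ (ℝ × ℝ)) (p : ℝ × ℝ) :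
    f p = f (1, 0) * p.1 + f (0, 1) * p.2 := by
  have hp : p = p.1 • ((1 : ℝ), (0 : ℝ)) + p.2 • ((0 : ℝ), (1 : ℝ)) := by ext <;> simp
  conv_lhs => rw [hp]
  simp only [map_add, map_smul, smul_eq_mul]
  ring

theorem mem_convexHull_symmDivisorPoints {n : ℕ} (hn : 3 ≤ n) {a b j₁ j₂ : ℝ}
    (ha1 : 1 ≤ a) (han : a ≤ n - 1) (hb1 : 1 ≤ b) (hbn : b ≤ n - 1)
    (h₁ : a * (n - b) = j₁ * n - 1) (h₂ : b * (n - a) = j₂ * n - 1)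
    (hj₁ : (Tratio (n - 1) + 3) / 4 < j₁) (hj₂ : (Tratio (n - 1) + 3) / 4 < j₂) :
    ((a, b) : ℝ × ℝ) ∈ convexHull ℝ (symmDivisorPoints n) := by
  refine (symmDivisorPoints_finite n).mem_convexHull_of_forall_exists_le fun f => ?_
  obtain ⟨α, β, hf⟩ : ∃ α β : ℝ, ∀ p, f p = α * p.1 + β * p.2 := ⟨_, _, f.apply_prod_eq⟩
  simp only [hf]
  rcases le_total 0 α with hα | hα
  · obtain ⟨p, hp, hle⟩ := exists_mem_divisorPoints_le hn hb1 hbn h₁ hj₁ hα (β := β)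
    exact ⟨p, Or.inl hp, hle⟩
  rcases le_total 0 β with hβ | hβ
  · obtain ⟨p, hp, hle⟩ := exists_mem_divisorPoints_le hn ha1 han h₂ hj₂ hβ (β := α)
    refine ⟨p.swap, swap_mem_symmDivisorPoints hp, ?_⟩
    simp only [Prod.fst_swap, Prod.snd_swap]
    linarith
  · have hmem := mk_mem_divisorPoints (n := n) (d := n - 1) (q := 1) (by omega) (by simp)
    refine ⟨_, Or.inl hmem, ?_⟩
    push_cast [Nat.cast_sub (by omega : 1 ≤ n)]
    nlinarith

theorem mul_sub_eq_of_mem_symmDivisorPoints {n : ℕ} {a b : ℤ}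
    (h : ((a : ℝ), (b : ℝ)) ∈ symmDivisorPoints n) :
    a * (n - b) = n - 1 ∨ b * (n - a) = n - 1 := by
  rcases h with hp | ⟨p, hp, hpab⟩
  · obtain ⟨d, q, -, -, hdq, hp⟩ := exists_of_mem_divisorPoints hp
    obtain ⟨rfl, rfl⟩ : a = d ∧ b = n - q := by
      simp only [Prod.mk.injEq] at hp; exact_mod_cast hp
    left; linear_combination hdq
  · obtain ⟨d, q, -, -, hdq, rfl⟩ := exists_of_mem_divisorPoints hp
    obtain ⟨rfl, rfl⟩ : a = n - q ∧ b = d := by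
      simp only [Prod.swap_prod_mk, Prod.mk.injEq] at hpab
      exact ⟨by exact_mod_cast hpab.1.symm, by exact_mod_cast hpab.2.symm⟩
    right; linear_combination hdq

theorem stmt17 (n : ℕ) (hn : 3 ≤ n) (a b : ℤ)
    (hv : ((a : ℝ), (b : ℝ)) ∈ modVertices n) :
    ∃ j : ℤ, 1 ≤ j ∧ j ≤ max 1 ⌊(Tratio (n - 1) + 3) / 4⌋ ∧
      (a * ((n : ℤ) - b) = j * (n : ℤ) - 1 ∨ b * ((n : ℤ) - a) = j * (n : ℤ) - 1) := by
  obtain ⟨a', b', ha1, han, hb1, hbn, ⟨c, hc⟩, hab⟩ := extremePoints_convexHull_subset hv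
  obtain ⟨rfl, rfl⟩ : a = a' ∧ b = b' := by
    simp only [Prod.mk.injEq] at hab
    exact_mod_cast hab
  have h₁ : a * (n - b) = (a - c) * n - 1 := by linear_combination -hc
  have h₂ : b * (n - a) = (b - c) * n - 1 := by linear_combination -hc
  set M := max 1 ⌊(Tratio (n - 1) + 3) / 4⌋
  by_cases hM₁ : a - c ≤ M
  · exact ⟨a - c, by nlinarith, hM₁, .inl h₁⟩
  by_cases hM₂ : b - c ≤ M
  · exact ⟨b - c, by nlinarith, hM₂, .inr h₂⟩
  have hlt (j : ℤ) (hj : ¬j ≤ M) : (Tratio (n - 1) + 3) / 4 < j :=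
    Int.floor_lt.1 ((le_max_right _ _).trans_lt (not_le.1 hj))
  have hhull := mem_convexHull_symmDivisorPoints hn (a := a) (b := b)
    (by exact_mod_cast ha1) (by exact_mod_cast han) (by exact_mod_cast hb1)
    (by exact_mod_cast hbn) (by exact_mod_cast h₁) (by exact_mod_cast h₂) (hlt _ hM₁) (hlt _ hM₂)
  have hext : ((a : ℝ), (b : ℝ)) ∈ (convexHull ℝ (symmDivisorPoints n)).extremePoints ℝ :=
    inter_extremePoints_subset_extremePoints_of_subset
      (convexHull_mono (symmDivisorPoints_subset_modPoints n)) ⟨hhull, hv⟩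
  refine ⟨1, le_rfl, le_max_left _ _, ?_⟩
  simpa using mul_sub_eq_of_mem_symmDivisorPoints (extremePoints_convexHull_subset hext)
end
end
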